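/- arXiv:1502.05640 — 3 statements merged into one kernel-verified Lean document; each statement's English description precedes it below -/
import Mathlib

section
/- Let K be a field and n ≥ 3 an integer. Consider the diagonal action of GL₂(K), via its induced action on P¹(K), on the set X_n(K) of n-tuples of pairwise distinct points of P¹(K). Then the map sending each (n−3)-tuple (t₁, …, t_{n−3}) of pairwise distinct elements of K \ {0, 1} to the orbit of the n-tuple ([0:1], [1:1], [1:0], [t₁:1], …, [t_{n−3}:1]) is a bijection from the set of such tuples onto the set of GL₂(K)-orbits of X_n(K). -/
open Projectivization

/-- The action of an invertible `2 × 2` matrix on the projective line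
`ℙ(K²)` (a Möbius transformation). -/
noncomputable def GLtwoToProj {K : Type*} [Field K] (g : GL (Fin 2) K) :
    Projectivization K (Fin 2 → K) → Projectivization K (Fin 2 → K) :=
  Projectivization.map
    ((LinearMap.GeneralLinearGroup.generalLinearEquiv K (Fin 2 → K))
        (Matrix.GeneralLinearGroup.toLin g)).toLinearMap
    (LinearEquiv.injective _)

/-- The point `[a : b]` of the projective line `P¹(K)`, for `(a, b) ≠ (0, 0)`. -/
noncomputable def projPt {K : Type*} [Field K] (a b : K) (h : a ≠ 0 ∨ b ≠ 0) :
    Projectivization K (Fin 2 → K) :=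
  Projectivization.mk K ![a, b] (by
    intro hab
    rcases h with h | h
    · exact h (by simpa using congrFun hab 0)
    · exact h (by simpa using congrFun hab 1))

/-- The `(m+3)`-tuple `([0:1], [1:1], [1:0], [t₁:1], …, [t_m:1])` of points of
`P¹(K)` attached to an `m`-tuple `t` of elements of `K`. -/
noncomputable def stdTuple {K : Type*} [Field K] {m : ℕ} (t : Fin m → K) :
    Fin (m + 3) → Projectivization K (Fin 2 → K) := fun i =>
  if h : (i : ℕ) < 3 then
    (if (i : ℕ) = 0 then projPt (0 : K) 1 (Or.inr one_ne_zero)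
     else if (i : ℕ) = 1 then projPt (1 : K) 1 (Or.inl one_ne_zero)
     else projPt (1 : K) 0 (Or.inl one_ne_zero))
  else projPt (t ⟨(i : ℕ) - 3, by have := i.isLt; omega⟩) 1 (Or.inr one_ne_zero)

/-!
Three distinct points `p, q, r` of `P¹` are the images of `[0:1], [1:1], [1:0]` under a matrix
whose columns represent `r` and `p`, rescaled so that their sum represents `q`. A matrix fixing
`[0:1], [1:1], [1:0]` is scalar and so acts trivially. Hence every orbit of injective tuples
contains exactly one tuple beginning with `[0:1], [1:1], [1:0]`; its other points differ from
`[1:0]`, so they are of the form `[t:1]`.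
-/

section ProjectiveLine

variable {K : Type*} [Field K]

theorem mk_eq_mk_iff_mul_eq_mul {v w : Fin 2 → K} (hv : v ≠ 0) (hw : w ≠ 0) :
    mk K v hv = mk K w hw ↔ v 0 * w 1 = v 1 * w 0 := by
  rw [mk_eq_mk_iff']
  constructor
  · rintro ⟨c, rfl⟩
    simp only [Pi.smul_apply, smul_eq_mul]
    ring
  · intro hvw
    by_cases hw1 : w 1 = 0
    · have hw0 : w 0 ≠ 0 := fun hw0 => hw (funext fun i => by fin_cases i <;> assumption)
      refine ⟨v 0 / w 0, funext fun i => ?_⟩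
      fin_cases i
      · simp [hw0]
      · simpa [hw1, hw0, eq_comm] using hvw
    · refine ⟨v 1 / w 1, funext fun i => ?_⟩
      fin_cases i
      · simp only [Fin.zero_eta, Pi.smul_apply, smul_eq_mul]
        field_simp
        linear_combination -hvw
      · simp [hw1]

theorem projPt_eq_projPt_iff {a b c d : K} (h : a ≠ 0 ∨ b ≠ 0) (h' : c ≠ 0 ∨ d ≠ 0) :
    projPt a b h = projPt c d h' ↔ a * d = b * c :=
  mk_eq_mk_iff_mul_eq_mul _ _

theorem exists_projPt_eq (p : Projectivization K (Fin 2 → K)) :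
    ∃ a b h, projPt a b h = p := by
  induction p with
  | h v hv =>
    refine ⟨v 0, v 1, ?_, ?_⟩
    · by_contra! h0
      exact hv (funext fun i => by fin_cases i <;> simp [h0])
    · rw [projPt]
      congr
      ext i
      fin_cases i <;> rfl

theorem GLtwoToProj_mk (g : GL (Fin 2) K) {v : Fin 2 → K} (hv : v ≠ 0) :
    GLtwoToProj g (mk K v hv) = mk K ((g : Matrix (Fin 2) (Fin 2) K).mulVec v)
      (by simpa using (Matrix.mulVec_injective_of_isUnit g.isUnit).ne hv) :=
  rfl

theorem GLtwoToProj_mul (g h : GL (Fin 2) K) (p : Projectivization K (Fin 2 → K)) :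
    GLtwoToProj (g * h) p = GLtwoToProj g (GLtwoToProj h p) := by
  induction p
  simp only [GLtwoToProj_mk, Matrix.GeneralLinearGroup.coe_mul, Matrix.mulVec_mulVec]

theorem GLtwoToProj_one (p : Projectivization K (Fin 2 → K)) :
    GLtwoToProj (1 : GL (Fin 2) K) p = p := by
  induction p
  simp only [GLtwoToProj_mk, Matrix.GeneralLinearGroup.coe_one, Matrix.one_mulVec]

theorem GLtwoToProj_projPt_eq_projPt_iff (g : GL (Fin 2) K) {a b c d : K}
    (h : a ≠ 0 ∨ b ≠ 0) (h' : c ≠ 0 ∨ d ≠ 0) :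
    GLtwoToProj g (projPt a b h) = projPt c d h' ↔
      (g 0 0 * a + g 0 1 * b) * d = (g 1 0 * a + g 1 1 * b) * c := by
  rw [projPt, projPt, GLtwoToProj_mk, mk_eq_mk_iff_mul_eq_mul]
  simp [Matrix.mulVec, dotProduct, Fin.sum_univ_two]

noncomputable def affinePt (a : K) : Projectivization K (Fin 2 → K) :=
  projPt a 1 (Or.inr one_ne_zero)

noncomputable def infinityPt : Projectivization K (Fin 2 → K) :=
  projPt 1 0 (Or.inl one_ne_zero)

theorem affinePt_injective : Function.Injective (affinePt (K := K)) := fun a b hab => by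
  simpa using (projPt_eq_projPt_iff _ _).1 hab

theorem affinePt_ne_infinityPt (a : K) : affinePt a ≠ infinityPt := by
  simp [affinePt, infinityPt, projPt_eq_projPt_iff]

theorem exists_affinePt_eq_of_ne_infinityPt {p : Projectivization K (Fin 2 → K)}
    (hp : p ≠ infinityPt) : ∃ a, affinePt a = p := by
  obtain ⟨a, b, h, rfl⟩ := exists_projPt_eq p
  have hb : b ≠ 0 := by
    rintro rfl
    exact hp ((projPt_eq_projPt_iff _ _).2 (by simp))
  exact ⟨a / b, (projPt_eq_projPt_iff _ _).2 (by field_simp)⟩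

theorem exists_GLtwoToProj_eq_of_pairwise_ne {p q r : Projectivization K (Fin 2 → K)}
    (hpq : p ≠ q) (hpr : p ≠ r) (hqr : q ≠ r) :
    ∃ g : GL (Fin 2) K, GLtwoToProj g (affinePt 0) = p ∧ GLtwoToProj g (affinePt 1) = q ∧
      GLtwoToProj g infinityPt = r := by
  obtain ⟨a, b, hab, rfl⟩ := exists_projPt_eq p
  obtain ⟨e, f, hef, rfl⟩ := exists_projPt_eq q
  obtain ⟨c, d, hcd, rfl⟩ := exists_projPt_eq r
  rw [Ne, projPt_eq_projPt_iff] at hpq hpr hqr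
  -- `l • (c, d) + μ • (a, b) = (c * b - d * a) • (e, f)`
  set l := e * b - f * a
  set μ := c * f - d * e
  have hdet : (!![l * c, μ * a; l * d, μ * b] : Matrix (Fin 2) (Fin 2) K).det ≠ 0 := by
    have hl : l ≠ 0 := sub_ne_zero.2 fun h => hpq (by linear_combination -h)
    have hμ : μ ≠ 0 := sub_ne_zero.2 fun h => hqr (by linear_combination -h)
    have hpr' : c * b - d * a ≠ 0 := sub_ne_zero.2 fun h => hpr (by linear_combination -h)
    rw [Matrix.det_fin_two_of]
    convert mul_ne_zero (mul_ne_zero hl hμ) hpr' using 1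
    ring
  refine ⟨Matrix.GeneralLinearGroup.mkOfDetNeZero _ hdet, ?_, ?_, ?_⟩ <;>
    simp only [affinePt, infinityPt, GLtwoToProj_projPt_eq_projPt_iff] <;>
    simp <;> ring

theorem GLtwoToProj_eq_self_of_fixes {g : GL (Fin 2) K}
    (h0 : GLtwoToProj g (affinePt 0) = affinePt 0) (h1 : GLtwoToProj g (affinePt 1) = affinePt 1)
    (hinf : GLtwoToProj g infinityPt = infinityPt) (p : Projectivization K (Fin 2 → K)) :
    GLtwoToProj g p = p := by
  obtain ⟨a, b, hab, rfl⟩ := exists_projPt_eq p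
  simp only [affinePt, infinityPt, GLtwoToProj_projPt_eq_projPt_iff] at h0 h1 hinf ⊢
  simp only [mul_zero, mul_one, zero_add, add_zero] at h0 h1 hinf
  linear_combination (a * b) * h1 + (b ^ 2 - a * b) * h0 + (a ^ 2 - a * b) * hinf

end ProjectiveLine

section NormalForm

variable {K : Type*} [Field K] {m : ℕ}

theorem stdTuple_eq_cons (t : Fin m → K) :
    stdTuple t =
      Fin.cons (affinePt 0) (Fin.cons (affinePt 1) (Fin.cons infinityPt (affinePt ∘ t))) := by
  funext i
  cases i using Fin.cases with
  | zero => rfl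
  | succ i =>
  cases i using Fin.cases with
  | zero => rfl
  | succ i =>
  cases i using Fin.cases with
  | zero => rfl
  | succ j =>
    simp [stdTuple, affinePt, dif_neg (show ¬ (j : ℕ) + 1 + 1 + 1 < 3 by omega)]

theorem stdTuple_injective_iff (t : Fin m → K) :
    Function.Injective (stdTuple t) ↔ Function.Injective t ∧ ∀ j, t j ≠ 0 ∧ t j ≠ 1 := by
  simp [stdTuple_eq_cons, Fin.cons_injective_iff, affinePt_injective.eq_iff,
    affinePt_injective.of_comp_iff, affinePt_ne_infinityPt, forall_and]
  tauto

theorem exists_GLtwoToProj_stdTuple_eq_iff (t t' : Fin m → K) :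
    (∃ g : GL (Fin 2) K, ∀ i, GLtwoToProj g (stdTuple t i) = stdTuple t' i) ↔ t = t' := by
  constructor
  · rintro ⟨g, hg⟩
    simp only [Fin.forall_fin_succ, stdTuple_eq_cons, Fin.cons_zero, Fin.cons_succ,
      Function.comp_apply] at hg
    obtain ⟨h0, h1, hinf, ht⟩ := hg
    funext j
    apply affinePt_injective
    rw [← ht j, GLtwoToProj_eq_self_of_fixes h0 h1 hinf]
  · rintro rfl
    exact ⟨1, fun i => GLtwoToProj_one _⟩

theorem exists_stdTuple_of_injective {f : Fin (m + 3) → Projectivization K (Fin 2 → K)}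
    (hf : Function.Injective f) :
    ∃ t : Fin m → K, (Function.Injective t ∧ ∀ j, t j ≠ 0 ∧ t j ≠ 1) ∧
      ∃ g : GL (Fin 2) K, ∀ i, GLtwoToProj g (stdTuple t i) = f i := by
  obtain ⟨g, h0, h1, hinf⟩ := exists_GLtwoToProj_eq_of_pairwise_ne
    (hf.ne (Fin.succ_ne_zero (0 : Fin (m + 2))).symm) (hf.ne (Fin.succ_ne_zero _).symm)
    (hf.ne (Fin.succ_injective _ |>.ne (Fin.succ_ne_zero (0 : Fin (m + 1))).symm))
  have hfin (j : Fin m) : GLtwoToProj g⁻¹ (f j.succ.succ.succ) ≠ infinityPt := by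
    intro hj
    have := congrArg (GLtwoToProj g) hj
    rw [← GLtwoToProj_mul, mul_inv_cancel, GLtwoToProj_one, hinf] at this
    exact hf.ne (Fin.succ_injective _ |>.ne <| Fin.succ_injective _ |>.ne <| Fin.succ_ne_zero _) this
  choose t ht using fun j => exists_affinePt_eq_of_ne_infinityPt (hfin j)
  have hgt : ∀ i, GLtwoToProj g (stdTuple t i) = f i := by
    simp only [Fin.forall_fin_succ, stdTuple_eq_cons, Fin.cons_zero, Fin.cons_succ,
      Function.comp_apply, ht, ← GLtwoToProj_mul, mul_inv_cancel, GLtwoToProj_one]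
    exact ⟨h0, h1, hinf, fun _ => trivial⟩
  refine ⟨t, (stdTuple_injective_iff t).1 ?_, g, hgt⟩
  exact Function.Injective.of_comp (f := GLtwoToProj g)
    (by rwa [show GLtwoToProj g ∘ stdTuple t = f from funext hgt])

end NormalForm

/-- For `n = m + 3 ≥ 3`, the map sending an `(n-3)`-tuple
`(t₁, …, t_{n-3})` of pairwise distinct elements of `K \ {0,1}` to the
`GL₂(K)`-orbit of `([0:1], [1:1], [1:0], [t₁:1], …, [t_{n-3}:1])` is a
bijection onto the set of `GL₂(K)`-orbits of `n`-tuples of pairwise distinct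
points of `P¹(K)`:  each such tuple `stdTuple t` consists of pairwise distinct
points, two valid parameter tuples lie in the same orbit iff they are equal
(injectivity on orbits), and every tuple of pairwise distinct points is in the
orbit of some `stdTuple t` (surjectivity onto orbits). -/
theorem moduli_M0n_points_bijection {K : Type*} [Field K] (m : ℕ) :
    (∀ t : Fin m → K,
        (Function.Injective t ∧ ∀ j, t j ≠ 0 ∧ t j ≠ 1) →
        Function.Injective (stdTuple t)) ∧
    (∀ t t' : Fin m → K,
        (Function.Injective t ∧ ∀ j, t j ≠ 0 ∧ t j ≠ 1) →
        (Function.Injective t' ∧ ∀ j, t' j ≠ 0 ∧ t' j ≠ 1) →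
        ((∃ g : GL (Fin 2) K, ∀ i, GLtwoToProj g (stdTuple t i) = stdTuple t' i)
          ↔ t = t')) ∧
    (∀ f : Fin (m + 3) → Projectivization K (Fin 2 → K),
        Function.Injective f →
        ∃ t : Fin m → K,
          (Function.Injective t ∧ ∀ j, t j ≠ 0 ∧ t j ≠ 1) ∧
          ∃ g : GL (Fin 2) K, ∀ i, GLtwoToProj g (stdTuple t i) = f i) :=
  ⟨fun t ht => (stdTuple_injective_iff t).2 ht,
    fun t t' _ _ => exists_GLtwoToProj_stdTuple_eq_iff t t',
    fun _ hf => exists_stdTuple_of_injective hf⟩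
end

section
/- Let R be a commutative ring and J an ideal of R. The extended Rees algebra A(J) equals the R-subalgebra of R[t, t⁻¹] generated by the element t together with the elements x·t⁻¹ for x ∈ J; that is, A(J) = Algebra.adjoin R ({t} ∪ {x·t⁻¹ : x ∈ J}). -/
open LaurentPolynomial

/-- The extended Rees algebra `A(J) = ⊕_{n ∈ ℤ} Jⁿ t^{-n} ⊆ R[t, t⁻¹]`
(with `Jⁿ = R` for `n ≤ 0`), as a subset of the Laurent polynomial ring. -/
def extendedReesSet {R : Type*} [CommRing R] (J : Ideal R) :
    Set (LaurentPolynomial R) :=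
  {f | ∀ m : ℤ, f.coeff m ∈ J ^ (-m).toNat}

/-! A monomial `a tⁿ` with `n = -k < 0` lies in `A(J)` iff `a ∈ Jᵏ`, and then it is a sum of
products of `k` generators `x t⁻¹`; conversely `A(J)` is closed under multiplication because
`Jⁱ Jʲ ⊆ J^(i+j)` and `(-(i + j)).toNat ≤ (-i).toNat + (-j).toNat`. -/

namespace LaurentPolynomial

variable {R : Type*}

theorem coeff_C_mul_T [Semiring R] (a : R) (n m : ℤ) :
    (C a * T n).coeff m = if n = m then a else 0 := by
  rw [← single_eq_C_mul_T]
  exact Finsupp.single_apply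

theorem sum_C_mul_T_coeff [Semiring R] (f : R[T;T⁻¹]) :
    ∑ n ∈ f.coeff.support, C (f.coeff n) * T n = f := by
  simp_rw [← single_eq_C_mul_T]
  exact AddMonoidAlgebra.sum_coeff_single f

end LaurentPolynomial

section ExtendedRees

variable {R : Type*} [CommRing R] (J : Ideal R)

theorem C_mul_T_mem_extendedReesSet_iff {a : R} {n : ℤ} :
    C a * T n ∈ extendedReesSet J ↔ a ∈ J ^ (-n).toNat := by
  refine ⟨fun h => by simpa [coeff_C_mul_T] using h n, fun ha m => ?_⟩
  rw [coeff_C_mul_T]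
  split_ifs with hnm
  · exact hnm ▸ ha
  · exact zero_mem _

def extendedReesAlgebra : Subalgebra R R[T;T⁻¹] where
  carrier := extendedReesSet J
  add_mem' hf hg m := add_mem (hf m) (hg m)
  mul_mem' {f g} hf hg m := by
    classical
    rw [AddMonoidAlgebra.coeff_mul]
    refine Ideal.sum_mem _ fun i _ => Ideal.sum_mem _ fun j _ => ?_
    dsimp only
    split_ifs with hij
    · refine Ideal.pow_le_pow_right (by omega : (-m).toNat ≤ (-i).toNat + (-j).toNat) ?_
      exact pow_add J _ _ ▸ Ideal.mul_mem_mul (hf i) (hg j)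
    · exact zero_mem _
  algebraMap_mem' r := by
    rw [← C_eq_algebraMap, ← mul_one (C r), ← T_zero]
    exact (C_mul_T_mem_extendedReesSet_iff J).2 (by simp)

def extendedReesGenerators : Set R[T;T⁻¹] :=
  {T 1} ∪ {y | ∃ x ∈ J, y = C x * T (-1)}

theorem extendedReesGenerators_subset : extendedReesGenerators J ⊆ extendedReesAlgebra J := by
  rintro y (rfl | ⟨x, hx, rfl⟩)
  · rw [← one_mul (T 1), ← map_one C]
    exact (C_mul_T_mem_extendedReesSet_iff J).2 (by simp)
  · exact (C_mul_T_mem_extendedReesSet_iff J).2 (by simpa using hx)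

theorem adjoin_extendedReesGenerators_le :
    Algebra.adjoin R (extendedReesGenerators J) ≤ extendedReesAlgebra J :=
  Algebra.adjoin_le (extendedReesGenerators_subset J)

theorem C_mul_T_neg_mem_adjoin {a : R} {k : ℕ} (ha : a ∈ J ^ k) :
    C a * T (-k) ∈ Algebra.adjoin R (extendedReesGenerators J) := by
  induction k generalizing a with
  | zero =>
    rw [Nat.cast_zero, neg_zero, T_zero, mul_one, C_eq_algebraMap]
    exact Subalgebra.algebraMap_mem _ a
  | succ k ih =>
    rw [pow_succ'] at ha
    refine Submodule.mul_induction_on ha (fun x hx b hb => ?_) fun x y hx hy => ?_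
    · have hsplit : C (x * b) * T (-(k + 1 : ℕ)) = (C x * T (-1)) * (C b * T (-k)) := by
        rw [map_mul, mul_mul_mul_comm, ← T_add]
        congr 2
        push_cast
        ring
      rw [hsplit]
      exact mul_mem (Algebra.subset_adjoin (Or.inr ⟨x, hx, rfl⟩)) (ih hb)
    · rw [map_add, add_mul]
      exact add_mem hx hy

theorem C_mul_T_mem_adjoin {a : R} {n : ℤ} (ha : a ∈ J ^ (-n).toNat) :
    C a * T n ∈ Algebra.adjoin R (extendedReesGenerators J) := by
  obtain ⟨k, rfl | rfl⟩ := Int.eq_nat_or_neg n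
  · have hT : T 1 ∈ Algebra.adjoin R (extendedReesGenerators J) :=
      Algebra.subset_adjoin (Or.inl rfl)
    rw [show (T k : R[T;T⁻¹]) = T 1 ^ k by rw [T_pow, mul_one], C_eq_algebraMap]
    exact mul_mem (Subalgebra.algebraMap_mem _ a) (pow_mem hT k)
  · exact C_mul_T_neg_mem_adjoin J (by simpa using ha)

theorem extendedReesSet_subset_adjoin :
    extendedReesSet J ⊆ Algebra.adjoin R (extendedReesGenerators J) := fun f hf => by
  rw [← sum_C_mul_T_coeff f]
  exact Subalgebra.sum_mem _ fun n _ => C_mul_T_mem_adjoin J (hf n)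

end ExtendedRees

/-- The extended Rees algebra `A(J)` is the `R`-subalgebra of
`R[t, t⁻¹]` generated by `t` together with the elements `x · t⁻¹` for `x ∈ J`. -/
theorem extendedReesSet_eq_adjoin {R : Type*} [CommRing R] (J : Ideal R) :
    extendedReesSet J =
      (Algebra.adjoin R
        ({T 1} ∪ {y : LaurentPolynomial R | ∃ x ∈ J, y = C x * T (-1)}) :
        Subalgebra R (LaurentPolynomial R)) :=
  (extendedReesSet_subset_adjoin J).antisymm (adjoin_extendedReesGenerators_le J)
end

section
/- Let R be a commutative ring and J an ideal of R, and let A(J) ⊆ R[t, t⁻¹] be the extended Rees algebra of J. Then an element f ∈ R[t, t⁻¹] lies in the principal ideal t·A(J) of A(J) if and only if for every integer m the coefficient of t^m in f lies in J^{max(1−m, 0)}. -/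
open LaurentPolynomial

theorem LaurentPolynomial.coeff_T_mul {R : Type*} [Semiring R] (n m : ℤ) (f : R[T;T⁻¹]) :
    (T n * f).coeff m = f.coeff (m - n) := by
  rw [T, AddMonoidAlgebra.coeff_single_mul_apply, one_mul, neg_add_eq_sub]

theorem exists_mem_extendedReesSet_eq_T_mul_iff {R : Type*} [CommRing R] (J : Ideal R) (n : ℤ)
    (f : R[T;T⁻¹]) :
    (∃ g ∈ extendedReesSet J, f = T n * g) ↔ ∀ m : ℤ, f.coeff m ∈ J ^ (n - m).toNat := by
  constructor
  · rintro ⟨g, hg, rfl⟩ m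
    rw [coeff_T_mul, ← neg_sub]
    exact hg (m - n)
  · intro h
    refine ⟨T (-n) * f, fun m => ?_, ?_⟩
    · rw [coeff_T_mul, sub_neg_eq_add, show -m = n - (m + n) by ring]
      exact h (m + n)
    · rw [← mul_assoc, ← T_add, add_neg_cancel, T_zero, one_mul]

/-- An element `f ∈ R[t, t⁻¹]` lies in the principal ideal
`t · A(J)` of the extended Rees algebra `A(J)` if and only if for every
integer `m` the coefficient of `t^m` in `f` lies in `J^{max(1-m, 0)}`. -/
theorem mem_t_mul_extendedReesSet_iff {R : Type*} [CommRing R] (J : Ideal R)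
    (f : LaurentPolynomial R) :
    (∃ g ∈ extendedReesSet J, f = T 1 * g) ↔
      ∀ m : ℤ, f.coeff m ∈ J ^ (1 - m).toNat :=
  exists_mem_extendedReesSet_eq_T_mul_iff J 1 f
end
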